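/- Let V be a finite-dimensional vector space with 𝕍 = V ⊕ V*. For a pure spinor φ = exp(-ω_Q) ∧ θ, where ω_Q is a 2-form on a subspace Q ⊆ V extended arbitrarily to V, and θ is a nonzero element of the top exterior power of the annihilator of Q, the corresponding Lagrangian subspace is N_φ = {v ⊕ α : v ∈ Q, α|_Q = ι(v)ω_Q}. In particular, the projection of N_φ to V is Q, and N_φ ∩ V equals the kernel of ω_Q. -/

import Mathlib

/-!
Since `ω` has even degree, `exp(-ω)` is a unit commuting with all 1-forms, and contraction `ι(v)`
acts on it as a derivation: `ι(v) exp(-ω) = -ι(v)ω ∧ exp(-ω)`. Hence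
`ρ(v ⊕ α)(exp(-ω) ∧ θ) = exp(-ω) ∧ ρ(v ⊕ (α - ι(v)ω))θ`, so `N_φ` is the image of `N_θ` under the
B-field transform `v ⊕ β ↦ v ⊕ (β + ι(v)ω)`.

For a nonzero top form `θ` of `Ann(Q)`, the summands `ι(v)θ` and `β ∧ θ` of `ρ(v ⊕ β)θ` have
different degrees, so both vanish. Contracting `a ∧ θ = 0` (`a ∈ Ann(Q)`) with `v` gives
`a(v) θ = -a ∧ ι(v)θ`, so `ι(v)θ = 0 ↔ v ∈ Q`; contracting `β ∧ θ` with `q ∈ Q` gives `β(q) θ`,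
so `β ∧ θ = 0 ↔ β ∈ Ann(Q)`. Thus `N_θ = Q ⊕ Ann(Q)`.
-/

open ExteriorAlgebra CliffordAlgebra Module

/-- Clifford action of `V ⊕ V*` on `∧ V*`. -/
noncomputable def cliffordRho {K V : Type*} [Field K] [AddCommGroup V] [Module K V]
    (w : V × Module.Dual K V) (φ : ExteriorAlgebra K (Module.Dual K V)) :
    ExteriorAlgebra K (Module.Dual K V) :=
  CliffordAlgebra.contractLeft (Module.Dual.eval K V w.1) φ + ExteriorAlgebra.ι K w.2 * φ

/-- Truncated exponential in an algebra, valid for nilpotent arguments of index `≤ n`. -/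
noncomputable def expA {K A : Type*} [Field K] [Ring A] [Algebra K A] (n : ℕ) (a : A) : A :=
  ∑ k ∈ Finset.range (n + 1), (k.factorial : K)⁻¹ • a ^ k

section expA

variable {K A : Type*} [Field K] [Ring A] [Algebra K A]

theorem Commute.expA_right {a x : A} (h : Commute a x) (n : ℕ) :
    Commute a (expA (K := K) n x) :=
  Commute.sum_right _ _ _ fun k _ ↦ (h.pow_right k).smul_right _

theorem isUnit_expA {x : A} (hx : IsNilpotent x) (n : ℕ) : IsUnit (expA (K := K) n x) := by
  set C := ∑ k ∈ Finset.range n, ((k + 1).factorial : K)⁻¹ • x ^ k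
  have hexp : expA (K := K) n x = 1 + x * C := by
    rw [expA, Finset.sum_range_succ', Finset.mul_sum, add_comm]
    simp only [pow_succ', mul_smul_comm, Nat.factorial_zero, Nat.cast_one, inv_one, pow_zero,
      one_smul]
  have hC : Commute x C := Commute.sum_right _ _ _ fun k _ ↦ (Commute.self_pow x k).smul_right _
  rw [hexp]
  exact (hC.isNilpotent_mul_right hx).isUnit_one_add

end expA

namespace ExteriorAlgebra

variable {R M : Type*} [CommRing R] [AddCommGroup M] [Module R M]

theorem ι_mul_ι_eq_neg (a b : M) : ι R a * ι R b = -(ι R b * ι R a) :=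
  eq_neg_of_add_eq_zero_left (ι_add_mul_swap a b)

theorem commute_ι_of_mem_exteriorPower_two (a : M) {x : ExteriorAlgebra R M}
    (hx : x ∈ ⋀[R]^2 M) : Commute (ι R a) x := by
  rw [exteriorPower, pow_two] at hx
  refine Submodule.mul_induction_on hx ?_ fun _ _ hx hy ↦ hx.add_right hy
  rintro _ ⟨b, rfl⟩ _ ⟨c, rfl⟩
  rw [Commute, SemiconjBy, ← mul_assoc, ι_mul_ι_eq_neg a b, neg_mul, mul_assoc,
    ι_mul_ι_eq_neg a c, mul_neg, neg_neg, mul_assoc]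

theorem contractLeft_eq_zero_of_mem_zero (f : Module.Dual R M) {x : ExteriorAlgebra R M}
    (hx : x ∈ ⋀[R]^0 M) : contractLeft f x = 0 := by
  rw [exteriorPower, pow_zero] at hx
  obtain ⟨r, rfl⟩ := Submodule.mem_one.mp hx
  exact contractLeft_algebraMap (Q := 0) f r

theorem contractLeft_mem_exteriorPower (f : Module.Dual R M) {k : ℕ} {x : ExteriorAlgebra R M}
    (hx : x ∈ ⋀[R]^(k + 1) M) : contractLeft f x ∈ ⋀[R]^k M := by
  induction k generalizing x with
  | zero =>
    rw [exteriorPower, pow_one] at hx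
    obtain ⟨b, rfl⟩ := hx
    rw [contractLeft_ι, exteriorPower, pow_zero]
    exact Submodule.algebraMap_mem _
  | succ k ih =>
    rw [exteriorPower, pow_succ'] at hx
    refine Submodule.mul_induction_on (C := fun x ↦ contractLeft f x ∈ ⋀[R]^(k + 1) M) hx
      ?_ fun _ _ hx hy ↦ (map_add (contractLeft f) _ _).symm ▸ add_mem hx hy
    rintro _ ⟨b, rfl⟩ y hy
    rw [contractLeft_ι_mul]
    refine sub_mem (Submodule.smul_mem _ _ hy) ?_
    rw [exteriorPower, pow_succ']
    exact Submodule.mul_mem_mul (LinearMap.mem_range_self _ b) (ih hy)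

theorem contractLeft_mem_exteriorPower_sub_one (f : Module.Dual R M) {k : ℕ}
    {x : ExteriorAlgebra R M} (hx : x ∈ ⋀[R]^k M) : contractLeft f x ∈ ⋀[R]^(k - 1) M := by
  cases k with
  | zero => exact contractLeft_eq_zero_of_mem_zero f hx ▸ zero_mem _
  | succ k => exact contractLeft_mem_exteriorPower f hx

theorem exists_contractLeft_eq_ι_of_mem_exteriorPower_two (f : Module.Dual R M)
    {x : ExteriorAlgebra R M} (hx : x ∈ ⋀[R]^2 M) : ∃ γ : M, contractLeft f x = ι R γ := by
  obtain ⟨γ, hγ⟩ : contractLeft f x ∈ LinearMap.range (ι R) := by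
    simpa only [exteriorPower, pow_one] using contractLeft_mem_exteriorPower (k := 1) f hx
  exact ⟨γ, hγ.symm⟩

theorem contractLeft_mul_of_mem_exteriorPower_two (f : Module.Dual R M)
    {x : ExteriorAlgebra R M} (hx : x ∈ ⋀[R]^2 M) (y : ExteriorAlgebra R M) :
    contractLeft f (x * y) = contractLeft f x * y + x * contractLeft f y := by
  rw [exteriorPower, pow_two] at hx
  refine Submodule.mul_induction_on (C := fun x ↦ contractLeft f (x * y) =
    contractLeft f x * y + x * contractLeft f y) hx ?_ fun _ _ hx hy ↦ ?_
  · rintro _ ⟨b, rfl⟩ _ ⟨c, rfl⟩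
    simp only [mul_assoc, contractLeft_ι_mul, contractLeft_ι, Algebra.algebraMap_eq_smul_one,
      mul_sub, sub_mul, smul_mul_assoc, mul_smul_comm, mul_one]
    abel
  · simp only [add_mul, map_add, hx, hy]
    abel

theorem contractLeft_pow_mul_of_mem_exteriorPower_two (f : Module.Dual R M)
    {x : ExteriorAlgebra R M} (hx : x ∈ ⋀[R]^2 M) (k : ℕ) (y : ExteriorAlgebra R M) :
    contractLeft f (x ^ k * y) = contractLeft f (x ^ k) * y + x ^ k * contractLeft f y := by
  induction k generalizing y with
  | zero => simp
  | succ k ih =>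
    rw [pow_succ', mul_assoc, contractLeft_mul_of_mem_exteriorPower_two f hx, ih,
      contractLeft_mul_of_mem_exteriorPower_two f hx]
    simp only [mul_add, add_mul, mul_assoc]
    abel

theorem contractLeft_pow_succ_of_mem_exteriorPower_two (f : Module.Dual R M)
    {x : ExteriorAlgebra R M} (hx : x ∈ ⋀[R]^2 M) (k : ℕ) :
    contractLeft f (x ^ (k + 1)) = (k + 1) • (contractLeft f x * x ^ k) := by
  obtain ⟨γ, hγ⟩ := exists_contractLeft_eq_ι_of_mem_exteriorPower_two f hx
  have hcomm : Commute x (contractLeft f x) :=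
    hγ ▸ (commute_ι_of_mem_exteriorPower_two γ hx).symm
  induction k with
  | zero => simp
  | succ k ih =>
    rw [pow_succ' x (k + 1), contractLeft_mul_of_mem_exteriorPower_two f hx, ih, mul_smul_comm,
      ← mul_assoc, hcomm.eq, mul_assoc, ← pow_succ', succ_nsmul _ (k + 1), add_comm]

theorem contractLeft_eq_zero_of_mem_pow_map_ι {A : Submodule R M} {f : Module.Dual R M}
    (hf : ∀ a ∈ A, f a = 0) {k : ℕ} {x : ExteriorAlgebra R M} (hx : x ∈ A.map (ι R) ^ k) :
    contractLeft f x = 0 := by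
  refine Submodule.pow_induction_on_left (C := fun x ↦ contractLeft f x = 0) _
    (contractLeft_algebraMap (Q := 0) f) (fun x y hx hy ↦ ?_) ?_ hx
  · rw [map_add, hx, hy, add_zero]
  · rintro _ ⟨a, ha, rfl⟩ x hx
    rw [contractLeft_ι_mul, hx, hf a ha, zero_smul, mul_zero, sub_zero]

theorem add_eq_zero_iff_of_mem_exteriorPower {i j : ℕ} (hij : i ≠ j) {x y : ExteriorAlgebra R M}
    (hx : x ∈ ⋀[R]^i M) (hy : y ∈ ⋀[R]^j M) : x + y = 0 ↔ x = 0 ∧ y = 0 := by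
  classical
  let 𝒜 : ℕ → Submodule R (ExteriorAlgebra R M) := fun n ↦ ⋀[R]^n M
  refine ⟨fun hxy ↦ ?_, fun ⟨hx0, hy0⟩ ↦ by rw [hx0, hy0, add_zero]⟩
  have hx0 : x = 0 := by
    have hcomponent :=
      congr_arg (fun z ↦ (DirectSum.decompose 𝒜 z i : ExteriorAlgebra R M)) hxy
    simpa only [DirectSum.decompose_add, DirectSum.add_apply, Submodule.coe_add,
      DirectSum.decompose_of_mem_same 𝒜 hx, DirectSum.decompose_of_mem_ne 𝒜 hy hij.symm,
      add_zero, DirectSum.decompose_zero, DirectSum.zero_apply, ZeroMemClass.coe_zero]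
      using hcomponent
  exact ⟨hx0, by rwa [hx0, zero_add] at hxy⟩

section Field

variable {K M : Type*} [Field K] [AddCommGroup M] [Module K M]

theorem contractLeft_expA_mul_of_mem_exteriorPower_two (f : Module.Dual K M)
    {x : ExteriorAlgebra K M} (hx : x ∈ ⋀[K]^2 M) (n : ℕ) (y : ExteriorAlgebra K M) :
    contractLeft f (expA (K := K) n x * y) =
      contractLeft f (expA (K := K) n x) * y + expA (K := K) n x * contractLeft f y := by
  simp only [expA, Finset.sum_mul, map_sum, ← Finset.sum_add_distrib, smul_mul_assoc, map_smul,
    contractLeft_pow_mul_of_mem_exteriorPower_two f hx, smul_add]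

theorem contractLeft_expA_of_mem_exteriorPower_two [CharZero K] (f : Module.Dual K M)
    {x : ExteriorAlgebra K M} (hx : x ∈ ⋀[K]^2 M) {n : ℕ} (hxn : x ^ (n + 1) = 0) :
    contractLeft f (expA (K := K) n x) = contractLeft f x * expA (K := K) n x := by
  have htop : contractLeft f x * x ^ n = 0 := by
    have h := contractLeft_pow_succ_of_mem_exteriorPower_two f hx n
    rwa [hxn, map_zero, eq_comm, ← Nat.cast_smul_eq_nsmul K, smul_eq_zero,
      or_iff_right (Nat.cast_ne_zero.mpr n.succ_ne_zero)] at h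
  have hterm (k : ℕ) : contractLeft f (((k + 1).factorial : K)⁻¹ • x ^ (k + 1)) =
      contractLeft f x * ((k.factorial : K)⁻¹ • x ^ k) := by
    rw [map_smul, contractLeft_pow_succ_of_mem_exteriorPower_two f hx, ← Nat.cast_smul_eq_nsmul K,
      smul_smul, mul_smul_comm]
    congr 1
    rw [Nat.factorial_succ, Nat.cast_mul]
    field_simp
  calc contractLeft f (expA (K := K) n x)
      = ∑ k ∈ Finset.range n, contractLeft f x * ((k.factorial : K)⁻¹ • x ^ k) := by
        rw [expA, Finset.sum_range_succ', map_add, map_sum,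
          Finset.sum_congr rfl fun k _ ↦ hterm k]
        simp
    _ = contractLeft f x * expA (K := K) n x := by
        rw [expA, Finset.sum_range_succ, mul_add, mul_smul_comm, htop, smul_zero, add_zero,
          Finset.mul_sum]

end Field

section FiniteDimensional

variable {K M : Type*} [Field K] [AddCommGroup M] [Module K M] [FiniteDimensional K M]

theorem exteriorPower_eq_bot_of_finrank_lt {k : ℕ} (hk : finrank K M < k) : ⋀[K]^k M = ⊥ := by
  rw [← exteriorPower.ιMulti_span_fixedDegree, Submodule.span_eq_bot]
  rintro _ ⟨v, rfl⟩
  refine AlternatingMap.map_linearDependent _ _ fun hli ↦ ?_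
  simpa using (hli.fintype_card_le_finrank.trans_lt hk).ne

theorem pow_eq_zero_of_mem_exteriorPower {k m : ℕ} {x : ExteriorAlgebra K M}
    (hx : x ∈ ⋀[K]^k M) (hkm : finrank K M < k * m) : x ^ m = 0 := by
  have hxm := Submodule.pow_mem_pow _ hx m
  rwa [exteriorPower, ← pow_mul, ← exteriorPower, exteriorPower_eq_bot_of_finrank_lt hkm,
    Submodule.mem_bot] at hxm

theorem map_ι_pow_eq_bot_of_finrank_lt (A : Submodule K M) {k : ℕ} (hk : finrank K A < k) :
    A.map (ι K) ^ k = ⊥ := by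
  have hrange :
      (LinearMap.range (ι K (M := A))).map (map A.subtype).toLinearMap = A.map (ι K) := by
    rw [ι_range_map_map, Submodule.range_subtype]
  rw [← hrange, ← Submodule.map_pow, ← exteriorPower, exteriorPower_eq_bot_of_finrank_lt hk,
    Submodule.map_bot]

end FiniteDimensional

end ExteriorAlgebra

section PureSpinor

variable {K V : Type*} [Field K] [AddCommGroup V] [Module K V]

theorem cliffordRho_expA_mul [CharZero K] {B : ExteriorAlgebra K (Module.Dual K V)}
    (hB : B ∈ ⋀[K]^2 (Module.Dual K V)) {n : ℕ} (hBn : B ^ (n + 1) = 0) {v : V}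
    {β : Module.Dual K V} (hβ : contractLeft (Module.Dual.eval K V v) B = ι K β)
    (α : Module.Dual K V) (θ : ExteriorAlgebra K (Module.Dual K V)) :
    cliffordRho (v, α) (expA (K := K) n B * θ) =
      expA (K := K) n B * cliffordRho (v, α + β) θ := by
  have hcomm (a : Module.Dual K V) : ι K a * expA (K := K) n B = expA (K := K) n B * ι K a :=
    ((commute_ι_of_mem_exteriorPower_two a hB).expA_right n).eq
  simp only [cliffordRho, contractLeft_expA_mul_of_mem_exteriorPower_two _ hB,
    contractLeft_expA_of_mem_exteriorPower_two _ hB hBn, hβ, map_add, mul_add, add_mul,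
    ← mul_assoc, hcomm]
  abel

variable [FiniteDimensional K V] {Q : Submodule K V} {θ : ExteriorAlgebra K (Module.Dual K V)}

theorem ι_mul_eq_zero_of_mem_dualAnnihilator
    (hθ : θ ∈ Q.dualAnnihilator.map (ι K) ^ (finrank K V - finrank K Q))
    {a : Module.Dual K V} (ha : a ∈ Q.dualAnnihilator) : ι K a * θ = 0 := by
  have hrank := Subspace.finrank_add_finrank_dualAnnihilator_eq Q
  have hmem := Submodule.mul_mem_mul (Submodule.mem_map_of_mem (f := ι K) ha) hθ
  rwa [← pow_succ', map_ι_pow_eq_bot_of_finrank_lt _ (by omega), Submodule.mem_bot] at hmem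

theorem contractLeft_eval_eq_zero_iff_mem
    (hθ : θ ∈ Q.dualAnnihilator.map (ι K) ^ (finrank K V - finrank K Q)) (hθ0 : θ ≠ 0)
    (v : V) :
    contractLeft (Module.Dual.eval K V v) θ = 0 ↔ v ∈ Q := by
  refine ⟨fun hv ↦ ?_, fun hv ↦ contractLeft_eq_zero_of_mem_pow_map_ι
    (fun a ha ↦ (Submodule.mem_dualAnnihilator a).mp ha v hv) hθ⟩
  rw [← Subspace.forall_mem_dualAnnihilator_apply_eq_zero_iff]
  intro a ha
  have h := congr_arg (contractLeft (Module.Dual.eval K V v))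
    (ι_mul_eq_zero_of_mem_dualAnnihilator hθ ha)
  rwa [contractLeft_ι_mul, hv, mul_zero, sub_zero, map_zero, smul_eq_zero,
    or_iff_left hθ0] at h

theorem ι_mul_eq_zero_iff_mem_dualAnnihilator
    (hθ : θ ∈ Q.dualAnnihilator.map (ι K) ^ (finrank K V - finrank K Q)) (hθ0 : θ ≠ 0)
    (β : Module.Dual K V) :
    ι K β * θ = 0 ↔ β ∈ Q.dualAnnihilator := by
  refine ⟨fun hβ ↦ (Submodule.mem_dualAnnihilator β).mpr fun q hq ↦ ?_,
    ι_mul_eq_zero_of_mem_dualAnnihilator hθ⟩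
  have h := congr_arg (contractLeft (Module.Dual.eval K V q)) hβ
  rwa [contractLeft_ι_mul, (contractLeft_eval_eq_zero_iff_mem hθ hθ0 q).mpr hq, mul_zero,
    sub_zero, map_zero, smul_eq_zero, or_iff_left hθ0] at h

theorem cliffordRho_eq_zero_iff_mem_dualAnnihilator
    (hθ : θ ∈ Q.dualAnnihilator.map (ι K) ^ (finrank K V - finrank K Q)) (hθ0 : θ ≠ 0)
    (v : V) (β : Module.Dual K V) :
    cliffordRho (v, β) θ = 0 ↔ v ∈ Q ∧ β ∈ Q.dualAnnihilator := by
  set m := finrank K V - finrank K Q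
  have hθm : θ ∈ ⋀[K]^m (Module.Dual K V) := pow_le_pow_left' LinearMap.map_le_range m hθ
  have hβθ : ι K β * θ ∈ ⋀[K]^(m + 1) (Module.Dual K V) := by
    rw [exteriorPower, pow_succ']
    exact Submodule.mul_mem_mul (LinearMap.mem_range_self _ β) hθm
  rw [cliffordRho, add_eq_zero_iff_of_mem_exteriorPower (by omega)
    (contractLeft_mem_exteriorPower_sub_one _ hθm) hβθ,
    contractLeft_eval_eq_zero_iff_mem hθ hθ0, ι_mul_eq_zero_iff_mem_dualAnnihilator hθ hθ0]

theorem cliffordRho_expA_neg_mul_eq_zero_iff [CharZero K]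
    {ω : ExteriorAlgebra K (Module.Dual K V)} (hω : ω ∈ ⋀[K]^2 (Module.Dual K V))
    (hθ : θ ∈ Q.dualAnnihilator.map (ι K) ^ (finrank K V - finrank K Q)) (hθ0 : θ ≠ 0)
    (v : V) (α : Module.Dual K V) :
    cliffordRho (v, α) (expA (K := K) (finrank K V) (-ω) * θ) = 0 ↔
      v ∈ Q ∧ ∀ q ∈ Q, contractLeft (Module.Dual.eval K V q)
        (contractLeft (Module.Dual.eval K V v) ω) =
          contractLeft (Module.Dual.eval K V q) (ι K α) := by
  obtain ⟨γ, hγ⟩ := exists_contractLeft_eq_ι_of_mem_exteriorPower_two _ hω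
  have hnil : (-ω) ^ (finrank K V + 1) = 0 := pow_eq_zero_of_mem_exteriorPower (neg_mem hω)
    (by rw [Subspace.dual_finrank_eq]; omega)
  rw [cliffordRho_expA_mul (neg_mem hω) hnil (β := -γ) (by rw [map_neg, hγ, map_neg]),
    (isUnit_expA ⟨_, hnil⟩ _).mul_right_eq_zero,
    cliffordRho_eq_zero_iff_mem_dualAnnihilator hθ hθ0, hγ]
  refine and_congr_right fun _ ↦ (Submodule.mem_dualAnnihilator _).trans <|
    forall₂_congr fun q _ ↦ ?_
  rw [contractLeft_ι, contractLeft_ι, algebraMap_inj, LinearMap.add_apply, LinearMap.neg_apply,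
    ← sub_eq_add_neg, sub_eq_zero, Module.Dual.eval_apply, Module.Dual.eval_apply, eq_comm]

end PureSpinor

/-- For a pure spinor `φ = exp(-ω) ∧ θ` with `ω` a 2-form (an arbitrary extension
to `V` of a 2-form on a subspace `Q ⊆ V`) and `θ` a nonzero element of the top exterior power
of the annihilator of `Q`, the null space is
`N_φ = {v ⊕ α : v ∈ Q, α|_Q = ι(v)ω|_Q}`; in particular the projection of `N_φ` to `V` is
`Q` and `N_φ ∩ V` is the kernel of `ω|_Q`. -/
theorem pure_spinors_stmt5 {K V : Type*} [Field K] [CharZero K] [AddCommGroup V] [Module K V]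
    [FiniteDimensional K V]
    (Q : Submodule K V)
    (ω : ExteriorAlgebra K (Module.Dual K V)) (hω : ω ∈ (⋀[K]^2 (Module.Dual K V)))
    (θ : ExteriorAlgebra K (Module.Dual K V))
    (hθdeg : θ ∈ (Q.dualAnnihilator.map
        (ExteriorAlgebra.ι K (M := Module.Dual K V))) ^ (Module.finrank K V - Module.finrank K Q))
    (hθ : θ ≠ 0)
    (φ : ExteriorAlgebra K (Module.Dual K V))
    (hφ : φ = expA (K := K) (Module.finrank K V) (-ω) * θ) :
    ({w : V × Module.Dual K V | cliffordRho w φ = 0} =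
      {w : V × Module.Dual K V | w.1 ∈ Q ∧ ∀ q ∈ Q,
        CliffordAlgebra.contractLeft (Module.Dual.eval K V q)
          (CliffordAlgebra.contractLeft (Module.Dual.eval K V w.1) ω) =
        CliffordAlgebra.contractLeft (Module.Dual.eval K V q) (ExteriorAlgebra.ι K w.2)}) ∧
    (∀ v : V, (∃ α : Module.Dual K V, cliffordRho (v, α) φ = 0) ↔ v ∈ Q) ∧
    (∀ v : V, cliffordRho (v, (0 : Module.Dual K V)) φ = 0 ↔
      (v ∈ Q ∧ ∀ q ∈ Q,
        CliffordAlgebra.contractLeft (Module.Dual.eval K V q)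
          (CliffordAlgebra.contractLeft (Module.Dual.eval K V v) ω) = 0)) := by
  subst hφ
  have hnull := cliffordRho_expA_neg_mul_eq_zero_iff hω hθdeg hθ
  refine ⟨Set.ext fun w ↦ hnull w.1 w.2,
    fun v ↦ ⟨fun ⟨α, hα⟩ ↦ ((hnull v α).mp hα).1, fun hv ↦ ?_⟩,
    fun v ↦ by simpa using hnull v 0⟩
  obtain ⟨γ, hγ⟩ := exists_contractLeft_eq_ι_of_mem_exteriorPower_two _ hω
  exact ⟨γ, (hnull v γ).mpr ⟨hv, fun q _ ↦ by rw [hγ]⟩⟩
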